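/- arXiv:1603.06887 — 2 statements merged into one kernel-verified Lean document; each statement's English description precedes it below -/
import Mathlib

section
/- Let A, B, C be three pairwise distinct finite sets of the same cardinality α > 0, such that every pair among them forms a KE collection (which holds automatically). Then {A,B,C} is an hke collection if and only if |A − B − C| = |B ∩ C − A|. -/
/-!
A collection with at most two members is automatically hke, and every proper subcollection of
`{A, B, C}` has at most two members, so `{A, B, C}` is hke iff it is KE. By inclusion–exclusion,
`|A ∪ B ∪ C| + |A ∩ B ∩ C| + |(B ∩ C) \ A| = |A \ B \ C| + |B| + |C|`, so with `|B| = |C| = α`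
the KE condition reads `|A \ B \ C| = |(B ∩ C) \ A|`.
-/

open Finset

/-- Union of a finite collection of finite sets. -/
def collU {α : Type*} [DecidableEq α] (Γ : Finset (Finset α)) : Finset α :=
  Γ.sup id

/-- Intersection of a finite collection of finite sets
(equals the usual intersection when the collection is non-empty). -/
def collI {α : Type*} [DecidableEq α] (Γ : Finset (Finset α)) : Finset α :=
  (Γ.sup id).filter (fun x => ∀ S ∈ Γ, x ∈ S)

/-- `e Γ = |⋃Γ| + |⋂Γ|` as an integer. -/
def collE {α : Type*} [DecidableEq α] (Γ : Finset (Finset α)) : ℤ :=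
  (collU Γ).card + (collI Γ).card

/-- `F` is a hereditary König–Egerváry collection with common cardinality `a`. -/
def IsHKE {α : Type*} [DecidableEq α] (F : Finset (Finset α)) (a : ℕ) : Prop :=
  (∀ S ∈ F, S.card = a) ∧
  ∀ Γ ⊆ F, Γ.Nonempty → collE Γ = 2 * (a : ℤ)

section Collections

variable {α : Type*} [DecidableEq α]

theorem card_union_union_add_card_inter_inter (A B C : Finset α) :
    #(A ∪ B ∪ C) + #(A ∩ B ∩ C) + #((B ∩ C) \ A) = #((A \ B) \ C) + #B + #C := by
  have hsdiff : (A \ B) \ C = A \ (B ∪ C) := sdiff_sdiff_left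
  have hinter : A ∩ B ∩ C = (B ∩ C) ∩ A := by rw [inter_assoc, inter_comm]
  have hA := card_sdiff_add_card A (B ∪ C)
  have hBC := card_inter_add_card_sdiff (B ∩ C) A
  have hB_C := card_union_add_card_inter B C
  rw [union_assoc, hsdiff, hinter]
  omega

theorem mem_collI {Γ : Finset (Finset α)} (hΓ : Γ.Nonempty) {x : α} :
    x ∈ collI Γ ↔ ∀ S ∈ Γ, x ∈ S := by
  obtain ⟨T, hT⟩ := hΓ
  simp only [collI, mem_filter, mem_sup, id, and_iff_right_iff_imp]
  exact fun hx => ⟨T, hT, hx T hT⟩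

@[simp]
theorem collU_insert (A : Finset α) (Γ : Finset (Finset α)) :
    collU (insert A Γ) = A ∪ collU Γ :=
  sup_insert

@[simp]
theorem collU_singleton (A : Finset α) : collU {A} = A :=
  sup_singleton

@[simp]
theorem collI_singleton (A : Finset α) : collI {A} = A := by
  ext x
  simp [mem_collI]

@[simp]
theorem collI_insert (A : Finset α) {Γ : Finset (Finset α)} (hΓ : Γ.Nonempty) :
    collI (insert A Γ) = A ∩ collI Γ := by
  ext x
  simp [mem_collI, hΓ]

theorem collE_singleton (A : Finset α) : collE {A} = 2 * (#A : ℤ) := by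
  simp only [collE, collU_singleton, collI_singleton]
  ring

theorem collE_pair (A B : Finset α) : collE {A, B} = (#A : ℤ) + #B := by
  simp only [collE, collU_insert, collU_singleton, collI_insert A (singleton_nonempty B),
    collI_singleton]
  exact_mod_cast card_union_add_card_inter A B

theorem collE_triple (A B C : Finset α) :
    collE {A, B, C} = (#(A ∪ B ∪ C) : ℤ) + #(A ∩ B ∩ C) := by
  simp [collE, insert_nonempty, union_assoc, inter_assoc]

theorem collE_eq_of_card_le_two {Γ : Finset (Finset α)} {a : ℕ} (hΓ : Γ.Nonempty)
    (h2 : #Γ ≤ 2) (hcard : ∀ S ∈ Γ, #S = a) : collE Γ = 2 * (a : ℤ) := by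
  obtain h1 | h2 : #Γ = 1 ∨ #Γ = 2 := by have := hΓ.card_pos; omega
  · obtain ⟨S, rfl⟩ := card_eq_one.1 h1
    rw [collE_singleton, hcard S (mem_singleton_self S)]
  · obtain ⟨S, T, -, rfl⟩ := card_eq_two.1 h2
    rw [collE_pair, hcard S (by simp), hcard T (by simp)]
    ring

theorem isHKE_iff_collE_of_card_le_three {F : Finset (Finset α)} {a : ℕ} (hF : F.Nonempty)
    (h3 : #F ≤ 3) (hcard : ∀ S ∈ F, #S = a) : IsHKE F a ↔ collE F = 2 * (a : ℤ) := by
  refine ⟨fun h => h.2 F subset_rfl hF, fun hF_KE => ⟨hcard, fun Γ hΓ hΓne => ?_⟩⟩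
  obtain rfl | hlt := hΓ.eq_or_ssubset
  · exact hF_KE
  · have := card_lt_card hlt
    exact collE_eq_of_card_le_two hΓne (by omega) fun S hS => hcard S (hΓ hS)

end Collections

theorem stmt_4_general {α : Type*} [DecidableEq α] (A B C : Finset α) (a : ℕ)
    (hA : A.card = a) (hB : B.card = a) (hC : C.card = a) :
    IsHKE ({A, B, C} : Finset (Finset α)) a ↔
      ((A \ B) \ C).card = ((B ∩ C) \ A).card := by
  have hcard : ∀ S ∈ ({A, B, C} : Finset (Finset α)), #S = a := by
    simp [hA, hB, hC]
  rw [isHKE_iff_collE_of_card_le_three (insert_nonempty _ _) card_le_three hcard, collE_triple]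
  have := card_union_union_add_card_inter_inter A B C
  omega

theorem stmt_4 {α : Type*} [DecidableEq α] (A B C : Finset α) (a : ℕ) (ha : 0 < a)
    (hA : A.card = a) (hB : B.card = a) (hC : C.card = a)
    (hAB : A ≠ B) (hAC : A ≠ C) (hBC : B ≠ C) :
    IsHKE ({A, B, C} : Finset (Finset α)) a ↔
      ((A \ B) \ C).card = ((B ∩ C) \ A).card :=
  stmt_4_general A B C a hA hB hC
end

section
/- Let Γ be a finite collection of finite sets such that Γ−{S} is an hke collection for each S ∈ Γ, and let m be the integer such that |⋂Γ₁ − ⋃Γ₂| − |⋂Γ₂ − ⋃Γ₁| = (−1)^{|Γ₁|+1}·m for all partitions {Γ₁,Γ₂} of Γ into non-empty subcollections. If |Γ| is even, then m = 0. -/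
open Finset

/-! Exchanging the two blocks of a partition `{Γ₁, Γ₂}` negates the left-hand side of the
defining identity of `m`, while the sign `(-1) ^ (|Γ₁| + 1)` stays the same when `|Γ|` is even;
hence `m = -m`. -/

theorem eq_zero_of_sub_eq_neg_one_pow_mul {x y m : ℤ} {p q : ℕ} (hpq : Even (p + q))
    (hxy : x - y = (-1) ^ (p + 1) * m) (hyx : y - x = (-1) ^ (q + 1) * m) : m = 0 := by
  have hsign : (-1 : ℤ) ^ (q + 1) = (-1) ^ (p + 1) :=
    neg_one_pow_congr <| by
      simpa only [Nat.even_add_one, not_iff_not] using (Nat.even_add.mp hpq).symm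
  rw [hsign] at hyx
  rcases neg_one_pow_eq_or ℤ (p + 1) with h | h <;> rw [h] at hxy hyx <;> linarith

theorem stmt_9_general {α : Type*} [DecidableEq α] (Γ : Finset (Finset α))
    (hcard : 2 ≤ Γ.card) (heven : Even Γ.card) (m : ℤ)
    (hm : ∀ Γ₁ Γ₂ : Finset (Finset α),
      Γ₁ ∪ Γ₂ = Γ → Disjoint Γ₁ Γ₂ → Γ₁.Nonempty → Γ₂.Nonempty →
      ((collI Γ₁ \ collU Γ₂).card : ℤ) - ((collI Γ₂ \ collU Γ₁).card : ℤ)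
        = (-1) ^ (Γ₁.card + 1) * m) :
    m = 0 := by
  obtain ⟨S, hS⟩ : Γ.Nonempty := card_pos.mp (by omega)
  have hrest : (Γ.erase S).Nonempty := by
    rw [← card_pos, card_erase_of_mem hS]; omega
  have hunion : {S} ∪ Γ.erase S = Γ := by rw [← insert_eq, insert_erase hS]
  have hdisj : Disjoint {S} (Γ.erase S) := disjoint_singleton_left.mpr (notMem_erase S Γ)
  have hpar : Even (({S} : Finset (Finset α)).card + (Γ.erase S).card) := by
    rwa [card_singleton, add_comm, card_erase_add_one hS]
  exact eq_zero_of_sub_eq_neg_one_pow_mul hpar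
    (hm _ _ hunion hdisj (singleton_nonempty S) hrest)
    (hm _ _ ((union_comm _ _).trans hunion) hdisj.symm hrest (singleton_nonempty S))

theorem stmt_9 {α : Type*} [DecidableEq α] (Γ : Finset (Finset α))
    (hcard : 2 ≤ Γ.card) (heven : Even Γ.card) (a : ℕ) (ha : 0 < a)
    (hhke : ∀ S ∈ Γ, IsHKE (Γ.erase S) a) (m : ℤ)
    (hm : ∀ Γ₁ Γ₂ : Finset (Finset α),
      Γ₁ ∪ Γ₂ = Γ → Disjoint Γ₁ Γ₂ → Γ₁.Nonempty → Γ₂.Nonempty →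
      ((collI Γ₁ \ collU Γ₂).card : ℤ) - ((collI Γ₂ \ collU Γ₁).card : ℤ)
        = (-1) ^ (Γ₁.card + 1) * m) :
    m = 0 :=
  stmt_9_general Γ hcard heven m hm
end
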